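/- Let N be a torsion-free complete normal subgroup of an n-space group Γ such that Γ/N is infinite dihedral, let V = Span(N), and let γ₁, γ₂ ∈ Γ be elements whose images Nγ₁, Nγ₂ are order-2 generators of Γ/N. Then Γ is torsion-free if and only if neither Nγ₁ nor Nγ₂ fixes a point of V/N under the induced action. -/

import Mathlib

/-- Euclidean n-space, as `Fin n → ℝ` with the dot product as inner product. -/
abbrev Eu (n : ℕ) : Type := Fin n → ℝ

/-- An isometry `a + A` of Euclidean n-space: `x ↦ a + A x` with `A` orthogonal. -/
@[ext] structure Iso (n : ℕ) where
  a : Eu n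
  A : Matrix.orthogonalGroup (Fin n) ℝ

namespace Iso

variable {n : ℕ}

/-- The matrix part of an isometry. -/
def mat (φ : Iso n) : Matrix (Fin n) (Fin n) ℝ := φ.A

instance : Mul (Iso n) := ⟨fun φ ψ => ⟨φ.a + φ.mat.mulVec ψ.a, φ.A * ψ.A⟩⟩
instance : One (Iso n) := ⟨⟨0, 1⟩⟩
instance : Inv (Iso n) :=
  ⟨fun φ => ⟨-(Matrix.mulVec ((φ.A⁻¹ : Matrix.orthogonalGroup (Fin n) ℝ) : Matrix (Fin n) (Fin n) ℝ) φ.a), φ.A⁻¹⟩⟩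

@[simp] lemma mul_a (φ ψ : Iso n) : (φ * ψ).a = φ.a + φ.mat.mulVec ψ.a := rfl
@[simp] lemma mul_A (φ ψ : Iso n) : (φ * ψ).A = φ.A * ψ.A := rfl
@[simp] lemma one_a : (1 : Iso n).a = 0 := rfl
@[simp] lemma one_A : (1 : Iso n).A = 1 := rfl
@[simp] lemma inv_A (φ : Iso n) : (φ⁻¹).A = φ.A⁻¹ := rfl
@[simp] lemma mat_mul (φ ψ : Iso n) : (φ * ψ).mat = φ.mat * ψ.mat := rfl
@[simp] lemma mat_one : (1 : Iso n).mat = 1 := rfl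

instance : Group (Iso n) where
  mul_assoc φ ψ χ := by
    ext1
    · simp [Matrix.mulVec_add, ← Matrix.mulVec_mulVec, add_assoc]
    · exact mul_assoc _ _ _
  one_mul φ := by
    ext1
    · simp
    · exact one_mul _
  mul_one φ := by
    ext1
    · simp
    · exact mul_one _
  inv_mul_cancel φ := by
    ext1
    · show (φ⁻¹).a + (φ⁻¹).mat.mulVec φ.a = (0 : Eu n)
      show -(Matrix.mulVec _ φ.a) + Matrix.mulVec _ φ.a = (0 : Eu n)
      exact neg_add_cancel _
    · exact inv_mul_cancel _

instance : SMul (Iso n) (Eu n) := ⟨fun φ x => φ.a + φ.mat.mulVec x⟩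

lemma smul_def (φ : Iso n) (x : Eu n) : φ • x = φ.a + φ.mat.mulVec x := rfl

instance : MulAction (Iso n) (Eu n) where
  one_smul x := by
    show (0 : Eu n) + (1 : Iso n).mat.mulVec x = x
    simp
  mul_smul φ ψ x := by
    show (φ * ψ).a + (φ * ψ).mat.mulVec x = φ.a + φ.mat.mulVec (ψ.a + ψ.mat.mulVec x)
    simp [Matrix.mulVec_add, ← Matrix.mulVec_mulVec, add_assoc]

/-- The translation `x ↦ v + x`. -/
def tr (v : Eu n) : Iso n := ⟨v, 1⟩

instance : TopologicalSpace (Iso n) :=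
  TopologicalSpace.induced (fun φ => (φ.a, φ.mat)) inferInstance

end Iso

/-- The orthogonal complement of a subspace of Euclidean n-space,
with respect to the standard (dot product) inner product. -/
def perp {n : ℕ} (V : Submodule ℝ (Eu n)) : Submodule ℝ (Eu n) where
  carrier := {x | ∀ v ∈ V, dotProduct v x = 0}
  add_mem' := by
    intro x y hx hy v hv
    simp [dotProduct_add, hx v hv, hy v hv]
  zero_mem' := by
    intro v hv
    simp
  smul_mem' := by
    intro c x hx v hv
    simp [dotProduct_smul, hx v hv]

/-- A monoid is torsion-free if no non-identity element has finite order
(the definition `Monoid.IsTorsionFree` of the older Mathlib, since removed). -/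
def Monoid.IsTorsionFree (G : Type*) [Monoid G] : Prop :=
  ∀ g : G, g ≠ 1 → ¬IsOfFinOrder g

/-- The span of a subgroup of isometries: the real span of the translation
vectors of the pure translations in it. -/
def spanOf {n : ℕ} (H : Subgroup (Iso n)) : Submodule ℝ (Eu n) :=
  Submodule.span ℝ {v : Eu n | Iso.tr v ∈ H}

/-- `N` is a normal subgroup of `Γ` (as subgroups of the isometry group). -/
def NormalIn {n : ℕ} (N Γ : Subgroup (Iso n)) : Prop :=
  N ≤ Γ ∧ ∀ γ ∈ Γ, ∀ ν ∈ N, γ * ν * γ⁻¹ ∈ N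

/-- An n-space group: a discrete subgroup of the isometry group of Euclidean
n-space with compact orbit space. -/
def IsSpaceGroup {n : ℕ} (Γ : Subgroup (Iso n)) : Prop :=
  DiscreteTopology Γ ∧
    IsCompact (Set.univ : Set (Quotient (MulAction.orbitRel Γ (Eu n))))

/-- `N` is a complete normal subgroup of `Γ`. -/
def IsCompleteNormal {n : ℕ} (N Γ : Subgroup (Iso n)) : Prop :=
  NormalIn N Γ ∧
    ∀ g : Iso n, g ∈ N ↔
      (g ∈ Γ ∧ g.a ∈ spanOf N ∧ ∀ x ∈ perp (spanOf N), (Iso.mat g).mulVec x = x)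

namespace SpaceGroupAux

open Iso Matrix

variable {n : ℕ}

lemma mat_coe (φ : Iso n) : φ.mat = (φ.A : Matrix (Fin n) (Fin n) ℝ) := rfl

lemma mat_orth (φ : Iso n) : φ.mat * φ.matᵀ = 1 := by
  have h := φ.A.2
  rw [Matrix.mem_orthogonalGroup_iff] at h
  simpa [mat_coe, Matrix.star_eq_conjTranspose,
    Matrix.conjTranspose_eq_transpose_of_trivial] using h

lemma mat_inv (φ : Iso n) : (φ⁻¹).mat = φ.matᵀ := by
  show ((φ.A⁻¹ : Matrix.orthogonalGroup (Fin n) ℝ) : Matrix (Fin n) (Fin n) ℝ) = φ.matᵀ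
  rw [Matrix.UnitaryGroup.inv_val]
  simp [mat_coe, Matrix.star_eq_conjTranspose, Matrix.conjTranspose_eq_transpose_of_trivial]

lemma inv_a (φ : Iso n) : (φ⁻¹).a = -(φ.matᵀ *ᵥ φ.a) := by
  show -(((φ.A⁻¹ : Matrix.orthogonalGroup (Fin n) ℝ) : Matrix (Fin n) (Fin n) ℝ) *ᵥ φ.a) = _
  rw [show ((φ.A⁻¹ : Matrix.orthogonalGroup (Fin n) ℝ) : Matrix (Fin n) (Fin n) ℝ) = (φ⁻¹).mat from rfl,
    mat_inv]

lemma tr_mat (v : Eu n) : (Iso.tr v).mat = 1 := rfl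

lemma tr_A (v : Eu n) : (Iso.tr v).A = 1 := rfl

lemma tr_a (v : Eu n) : (Iso.tr v).a = v := rfl

lemma conj_tr (γ : Iso n) (v : Eu n) : γ * Iso.tr v * γ⁻¹ = Iso.tr (γ.mat *ᵥ v) := by
  ext1
  · show (γ * Iso.tr v).a + (γ * Iso.tr v).mat *ᵥ (γ⁻¹).a = γ.mat *ᵥ v
    rw [inv_a]
    simp [tr_a, tr_mat, Matrix.mulVec_neg, Matrix.mulVec_mulVec, ← mul_assoc, mat_orth]
  · show γ.A * (Iso.tr v).A * γ.A⁻¹ = (1 : Matrix.orthogonalGroup (Fin n) ℝ)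
    rw [tr_A, mul_one, mul_inv_cancel]

end SpaceGroupAux
namespace SpaceGroupAux

open Iso Matrix

variable {n : ℕ}

lemma smul_add_vec (φ : Iso n) (x w : Eu n) : φ • (x + w) = φ • x + φ.mat *ᵥ w := by
  simp only [Iso.smul_def, Matrix.mulVec_add]
  abel

noncomputable def euEquiv (n : ℕ) : Eu n ≃ₗ[ℝ] EuclideanSpace ℝ (Fin n) :=
  (WithLp.linearEquiv 2 ℝ (Eu n)).symm

lemma inner_euEquiv (x y : Eu n) :
    (inner ℝ (euEquiv n x) (euEquiv n y) : ℝ) = dotProduct x y := by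
  simp [euEquiv, PiLp.inner_apply, RCLike.inner_apply, dotProduct]
  exact Finset.sum_congr rfl (fun i _ => mul_comm _ _)

lemma exists_decomp (V : Submodule ℝ (Eu n)) (x : Eu n) :
    ∃ v ∈ V, x - v ∈ perp V := by
  classical
  set e := euEquiv n with he
  set K : Submodule ℝ (EuclideanSpace ℝ (Fin n)) := V.map e.toLinearMap with hK
  obtain ⟨y, hy, z, hz, hxyz⟩ := K.exists_add_mem_mem_orthogonal (e x)
  obtain ⟨v, hv, rfl⟩ := hy
  refine ⟨v, hv, ?_⟩
  intro u hu
  have hz' : (inner ℝ (e u) z : ℝ) = 0 := hz (e u) ⟨u, hu, rfl⟩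
  have : e (x - v) = z := by
    have := hxyz
    apply_fun (fun t => t - e v) at this
    rw [map_sub]
    rw [this]; change e v + z - e v = z; abel
  rw [← this] at hz'
  rw [← inner_euEquiv]
  exact hz'

lemma eq_zero_of_mem_inf (V : Submodule ℝ (Eu n)) {x : Eu n}
    (h1 : x ∈ V) (h2 : x ∈ perp V) : x = 0 :=
  dotProduct_self_eq_zero.mp (h2 x h1)

end SpaceGroupAux
namespace SpaceGroupAux

open Iso Matrix

variable {n : ℕ} {Γ N : Subgroup (Iso n)}

lemma mat_mem_span (hN : IsCompleteNormal N Γ) {γ : Iso n} (hγ : γ ∈ Γ)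
    {v : Eu n} (hv : v ∈ spanOf N) : γ.mat *ᵥ v ∈ spanOf N := by
  induction hv using Submodule.span_induction with
  | mem w hw =>
      have h1 : γ * Iso.tr w * γ⁻¹ ∈ N := hN.1.2 γ hγ _ hw
      rw [conj_tr] at h1
      have h2 := ((hN.2 _).mp h1).2.1
      rwa [tr_a] at h2
  | zero => simpa using Submodule.zero_mem _
  | add x y _ _ hx hy => rw [Matrix.mulVec_add]; exact Submodule.add_mem _ hx hy
  | smul c x _ hx => rw [Matrix.mulVec_smul]; exact Submodule.smul_mem _ _ hx

lemma mat_mem_perp (hN : IsCompleteNormal N Γ) {γ : Iso n} (hγ : γ ∈ Γ)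
    {x : Eu n} (hx : x ∈ perp (spanOf N)) : γ.mat *ᵥ x ∈ perp (spanOf N) := by
  intro w hw
  have h1 : (γ⁻¹).mat *ᵥ w ∈ spanOf N := mat_mem_span hN (inv_mem hγ) hw
  rw [mat_inv] at h1
  calc dotProduct w (γ.mat *ᵥ x) = dotProduct (γ.matᵀ *ᵥ w) x := by
        rw [Matrix.dotProduct_mulVec, Matrix.mulVec_transpose]
    _ = 0 := hx _ h1

end SpaceGroupAux
namespace SpaceGroupAux

open Iso Matrix Topology

variable {n : ℕ}

def iota (n : ℕ) : Iso n → (Eu n) × Matrix (Fin n) (Fin n) ℝ := fun φ => (φ.a, φ.mat)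

lemma iota_inj : Function.Injective (iota n) := by
  intro φ ψ h
  ext1
  · exact congrArg Prod.fst h
  · exact Subtype.ext (congrArg Prod.snd h)

lemma inducing_iota : IsInducing (iota n) := ⟨rfl⟩

lemma embedding_iota : IsEmbedding (iota n) := ⟨inducing_iota, iota_inj⟩

instance : T2Space (Iso n) := embedding_iota.t2Space

lemma continuous_a : Continuous (fun φ : Iso n => φ.a) :=
  continuous_fst.comp (inducing_iota.continuous)

lemma continuous_mat : Continuous (fun φ : Iso n => φ.mat) :=
  continuous_snd.comp (inducing_iota.continuous)

instance : ContinuousMul (Iso n) := by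
  constructor
  apply continuous_induced_rng.2
  show Continuous (fun p : Iso n × Iso n => ((p.1 * p.2).a, (p.1 * p.2).mat))
  simp only [Iso.mul_a, Iso.mat_mul]
  refine Continuous.prodMk ?_ ?_
  · exact (continuous_a.comp continuous_fst).add
      ((continuous_mat.comp continuous_fst).matrix_mulVec (continuous_a.comp continuous_snd))
  · exact (continuous_mat.comp continuous_fst).matrix_mul (continuous_mat.comp continuous_snd)

instance : ContinuousInv (Iso n) := by
  constructor
  apply continuous_induced_rng.2
  show Continuous (fun φ : Iso n => ((φ⁻¹).a, (φ⁻¹).mat))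
  have h1 : (fun φ : Iso n => ((φ⁻¹).a, (φ⁻¹).mat))
      = fun φ : Iso n => (-(φ.matᵀ *ᵥ φ.a), φ.matᵀ) := by
    funext φ; rw [inv_a, mat_inv]
  rw [h1]
  exact Continuous.prodMk (continuous_mat.matrix_transpose.matrix_mulVec continuous_a).neg
    continuous_mat.matrix_transpose

instance : IsTopologicalGroup (Iso n) := ⟨⟩

lemma isCompact_orthSet :
    IsCompact {M : Matrix (Fin n) (Fin n) ℝ | M ∈ Matrix.orthogonalGroup (Fin n) ℝ} := by
  have hpi : IsCompact
      (Set.univ.pi (fun _ : Fin n => Set.univ.pi fun _ : Fin n => Set.Icc (-1 : ℝ) 1) :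
        Set (Matrix (Fin n) (Fin n) ℝ)) :=
    isCompact_univ_pi fun _ => isCompact_univ_pi fun _ => isCompact_Icc
  apply hpi.of_isClosed_subset
  · have : {M : Matrix (Fin n) (Fin n) ℝ | M ∈ Matrix.orthogonalGroup (Fin n) ℝ}
        = (fun M : Matrix (Fin n) (Fin n) ℝ => M * star M) ⁻¹' {1} := by
      ext M
      simp [Matrix.mem_orthogonalGroup_iff, Matrix.star_eq_conjTranspose,
        Matrix.conjTranspose_eq_transpose_of_trivial]
    rw [this]
    exact IsClosed.preimage (continuous_id.matrix_mul continuous_id.matrix_conjTranspose)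
      isClosed_singleton
  · intro M hM
    have hM' : (M : Matrix (Fin n) (Fin n) ℝ) ∈ Matrix.orthogonalGroup (Fin n) ℝ := hM
    replace hM' := (Matrix.mem_orthogonalGroup_iff (A := M)).mp hM'
    intro i _
    intro j _
    have hrow : ∑ k, M i k * M i k = 1 := by
      have h := congrFun (congrFun hM' i) i
      rw [Matrix.one_apply_eq] at h
      have h2 : ∑ k, M i k * (Matrix.transpose M) k i = 1 := h
      exact h2
    have h1 : M i j * M i j ≤ 1 := by
      rw [← hrow]
      exact Finset.single_le_sum (f := fun k => M i k * M i k)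
        (fun k _ => mul_self_nonneg _) (Finset.mem_univ j)
    constructor <;> nlinarith [mul_self_nonneg (M i j)]

lemma isCompact_stab (x : Eu n) : IsCompact {φ : Iso n | φ • x = x} := by
  rw [inducing_iota.isCompact_iff]
  have himg : iota n '' {φ : Iso n | φ • x = x}
      = (fun M : Matrix (Fin n) (Fin n) ℝ => (x - M *ᵥ x, M)) ''
        {M : Matrix (Fin n) (Fin n) ℝ | M ∈ Matrix.orthogonalGroup (Fin n) ℝ} := by
    ext p
    constructor
    · rintro ⟨φ, hφ, rfl⟩
      refine ⟨φ.mat, φ.A.2, ?_⟩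
      rw [Set.mem_setOf_eq, Iso.smul_def] at hφ
      have : φ.a = x - φ.mat *ᵥ x := eq_sub_of_add_eq hφ
      simp [iota, ← this]
    · rintro ⟨M, hM, rfl⟩
      refine ⟨⟨x - M *ᵥ x, ⟨M, hM⟩⟩, ?_, rfl⟩
      rw [Set.mem_setOf_eq, Iso.smul_def]
      show x - M *ᵥ x + M *ᵥ x = x
      abel
  rw [himg]
  exact isCompact_orthSet.image ((continuous_const.sub
    (continuous_id.matrix_mulVec continuous_const)).prodMk continuous_id)

lemma finite_order_of_fix {Γ : Subgroup (Iso n)} (hdisc : DiscreteTopology Γ)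
    {g : Iso n} (hg : g ∈ Γ) {x : Eu n} (hx : g • x = x) :
    ∃ k : ℕ, 0 < k ∧ g ^ k = 1 := by
  by_contra hcon
  push_neg at hcon
  have hfin : ¬ IsOfFinOrder g := by
    rw [isOfFinOrder_iff_pow_eq_one]
    rintro ⟨k, hk, hgk⟩
    exact hcon k hk hgk
  have hinj : Function.Injective (fun k : ℕ => g ^ k) :=
    injective_pow_iff_not_isOfFinOrder.mpr hfin
  have hfix : ∀ k : ℕ, g ^ k • x = x := by
    intro k
    induction k with
    | zero => simp
    | succ m ih => rw [pow_succ, mul_smul, hx, ih]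
  have hsub : Set.range (fun k : ℕ => g ^ k) ⊆ (Γ : Set (Iso n)) ∩ {φ : Iso n | φ • x = x} := by
    rintro _ ⟨k, rfl⟩
    exact ⟨pow_mem hg k, hfix k⟩
  have hcl : IsClosed (Γ : Set (Iso n)) := Subgroup.isClosed_of_discrete
  have hcpt : IsCompact ((Γ : Set (Iso n)) ∩ {φ : Iso n | φ • x = x}) :=
    (isCompact_stab x).inter_left hcl
  have hdt : DiscreteTopology ((Γ : Set (Iso n)) ∩ {φ : Iso n | φ • x = x} : Set (Iso n)) :=
    DiscreteTopology.of_subset hdisc Set.inter_subset_left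
  have hfin2 : ((Γ : Set (Iso n)) ∩ {φ : Iso n | φ • x = x}).Finite := hcpt.finite (isDiscrete_iff_discreteTopology.mpr hdt)
  exact (Set.infinite_range_of_injective hinj) (hfin2.subset hsub)

end SpaceGroupAux
namespace SpaceGroupAux

open Iso

variable {n : ℕ}

open Matrix in
lemma exists_fixed (g : Iso n) {k : ℕ} (hk : 0 < k) (h : g ^ k = 1) :
    ∃ x : Eu n, g • x = x := by
  classical
  set f : ℕ → Eu n := fun i => g ^ i • (0 : Eu n) with hf
  set s : Eu n := ∑ i ∈ Finset.range k, f i with hs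
  refine ⟨(k : ℝ)⁻¹ • s, ?_⟩
  have hknz : (k : ℝ) ≠ 0 := Nat.cast_ne_zero.mpr hk.ne'
  have hshift : ∑ i ∈ Finset.range k, f (i + 1) = s := by
    have h1 : ∑ i ∈ Finset.range (k + 1), f i = (∑ i ∈ Finset.range k, f (i + 1)) + f 0 :=
      Finset.sum_range_succ' f k
    have h2 : ∑ i ∈ Finset.range (k + 1), f i = s + f k := Finset.sum_range_succ f k
    have h3 : f k = f 0 := by simp [hf, h]
    rw [h3] at h2
    have := h1.symm.trans h2
    exact add_right_cancel this
  have hstep : ∀ i, f (i + 1) = g.a + g.mat *ᵥ f i := by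
    intro i
    show g ^ (i + 1) • (0 : Eu n) = _
    rw [pow_succ', mul_smul]
    rfl
  have hsum : ∑ i ∈ Finset.range k, f (i + 1)
      = (k : ℝ) • g.a + ∑ i ∈ Finset.range k, g.mat *ᵥ f i := by
    rw [Finset.sum_congr rfl fun i _ => hstep i, Finset.sum_add_distrib]
    congr 1
    rw [Finset.sum_const, Finset.card_range]
    rw [Nat.cast_smul_eq_nsmul ℝ]
  have hmv : g.mat *ᵥ ((k : ℝ)⁻¹ • s) = (k : ℝ)⁻¹ • ∑ i ∈ Finset.range k, g.mat *ᵥ f i := by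
    rw [Matrix.mulVec_smul]
    congr 1
    rw [hs]
    induction (Finset.range k) using Finset.induction with
    | empty => simp
    | insert _ _ hx ih => simp_all [Finset.sum_insert hx, Matrix.mulVec_add]
  rw [Iso.smul_def, hmv]
  have : g.a + (k : ℝ)⁻¹ • ∑ i ∈ Finset.range k, g.mat *ᵥ f i
      = (k : ℝ)⁻¹ • ((k : ℝ) • g.a + ∑ i ∈ Finset.range k, g.mat *ᵥ f i) := by
    rw [smul_add, smul_smul, inv_mul_cancel₀ hknz, one_smul]
  rw [this, ← hsum, hshift]

section Dihedral

variable {G : Type*} [Group G]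

lemma inv_self {x : G} (h : x * x = 1) : x⁻¹ = x := by
  rw [eq_comm, eq_inv_iff_mul_eq_one, h]

lemma dih_conj {x₁ x₂ : G} (h1 : x₁ * x₁ = 1) (h2 : x₂ * x₂ = 1) :
    x₁ * (x₁ * x₂) * x₁⁻¹ = (x₁ * x₂)⁻¹ := by
  rw [mul_inv_rev, inv_self h1, inv_self h2]
  calc x₁ * (x₁ * x₂) * x₁ = x₁ * x₁ * (x₂ * x₁) := by group
    _ = x₂ * x₁ := by rw [h1, one_mul]

lemma dih_key {x₁ x₂ : G} (h1 : x₁ * x₁ = 1) (h2 : x₂ * x₂ = 1) (m : ℤ) :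
    x₁ * (x₁ * x₂) ^ m * x₁⁻¹ = (x₁ * x₂) ^ (-m) := by
  have h := map_zpow (MulAut.conj x₁) (x₁ * x₂) m
  simp only [MulAut.conj_apply] at h
  rw [h, dih_conj h1 h2, inv_zpow, ← zpow_neg]

lemma dih_swap {x₁ x₂ : G} (h1 : x₁ * x₁ = 1) (h2 : x₂ * x₂ = 1) (m : ℤ) :
    x₁ * (x₁ * x₂) ^ m = (x₁ * x₂) ^ (-m) * x₁ := by
  calc x₁ * (x₁ * x₂) ^ m = (x₁ * (x₁ * x₂) ^ m * x₁⁻¹) * x₁ := by group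
    _ = (x₁ * x₂) ^ (-m) * x₁ := by rw [dih_key h1 h2]

def dihSub (x₁ x₂ : G) (h1 : x₁ * x₁ = 1) (h2 : x₂ * x₂ = 1) : Subgroup G where
  carrier := {q | (∃ m : ℤ, q = (x₁ * x₂) ^ m) ∨ ∃ m : ℤ, q = (x₁ * x₂) ^ m * x₁}
  one_mem' := Or.inl ⟨0, by simp⟩
  mul_mem' := by
    rintro a b (⟨ma, rfl⟩ | ⟨ma, rfl⟩) (⟨mb, rfl⟩ | ⟨mb, rfl⟩)
    · exact Or.inl ⟨ma + mb, by rw [zpow_add]⟩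
    · exact Or.inr ⟨ma + mb, by rw [zpow_add, mul_assoc]⟩
    · refine Or.inr ⟨ma - mb, ?_⟩
      rw [mul_assoc, dih_swap h1 h2, ← mul_assoc, ← zpow_add, ← sub_eq_add_neg]
    · refine Or.inl ⟨ma - mb, ?_⟩
      calc (x₁ * x₂) ^ ma * x₁ * ((x₁ * x₂) ^ mb * x₁)
          = (x₁ * x₂) ^ ma * (x₁ * (x₁ * x₂) ^ mb) * x₁ := by group
        _ = (x₁ * x₂) ^ ma * ((x₁ * x₂) ^ (-mb) * x₁) * x₁ := by rw [dih_swap h1 h2]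
        _ = (x₁ * x₂) ^ ma * (x₁ * x₂) ^ (-mb) * (x₁ * x₁) := by group
        _ = (x₁ * x₂) ^ (ma - mb) := by rw [h1, mul_one, ← zpow_add, ← sub_eq_add_neg]
  inv_mem' := by
    rintro a (⟨m, rfl⟩ | ⟨m, rfl⟩)
    · exact Or.inl ⟨-m, by rw [zpow_neg]⟩
    · refine Or.inr ⟨m, ?_⟩
      calc ((x₁ * x₂) ^ m * x₁)⁻¹ = x₁⁻¹ * ((x₁ * x₂) ^ m)⁻¹ := mul_inv_rev _ _
        _ = x₁ * (x₁ * x₂) ^ (-m) := by rw [inv_self h1, ← zpow_neg]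
        _ = (x₁ * x₂) ^ m * x₁ := by rw [dih_swap h1 h2, neg_neg]

lemma dih_form {x₁ x₂ : G} (h1 : x₁ * x₁ = 1) (h2 : x₂ * x₂ = 1)
    (hgen : ∀ q : G, q ∈ Subgroup.closure {x₁, x₂}) (q : G) :
    (∃ m : ℤ, q = (x₁ * x₂) ^ m) ∨ ∃ m : ℤ, q = (x₁ * x₂) ^ m * x₁ := by
  have hle : Subgroup.closure {x₁, x₂} ≤ dihSub x₁ x₂ h1 h2 := by
    rw [Subgroup.closure_le]
    rintro y (rfl | rfl)
    · exact Or.inr ⟨0, by rw [zpow_zero, one_mul]⟩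
    · refine Or.inr ⟨-1, ?_⟩
      rw [zpow_neg, zpow_one, mul_inv_rev, inv_self h1, inv_self h2, mul_assoc, h1, mul_one]
  exact hle (hgen q)

lemma dihedral_torsion {x₁ x₂ t : G} (h1 : x₁ * x₁ = 1) (h2 : x₂ * x₂ = 1)
    (hr : ∀ m : ℤ, (x₁ * x₂) ^ m = 1 → m = 0)
    (hgen : ∀ q : G, q ∈ Subgroup.closure {x₁, x₂})
    (ht : t ≠ 1) {k : ℕ} (hk : 0 < k) (htk : t ^ k = 1) :
    ∃ w : G, t = w * x₁ * w⁻¹ ∨ t = w * x₂ * w⁻¹ := by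
  rcases dih_form h1 h2 hgen t with ⟨m, rfl⟩ | ⟨m, rfl⟩
  · exfalso
    have hpow : (x₁ * x₂) ^ (m * (k : ℤ)) = 1 := by
      rw [zpow_mul, zpow_natCast, htk]
    have hmk := hr _ hpow
    have hm : m = 0 := by
      rcases mul_eq_zero.mp hmk with h | h
      · exact h
      · exact absurd h (by exact_mod_cast hk.ne')
    exact ht (by rw [hm, zpow_zero])
  · rcases Int.even_or_odd m with ⟨j, hj⟩ | ⟨j, hj⟩
    · refine ⟨(x₁ * x₂) ^ j, Or.inl ?_⟩
      calc (x₁ * x₂) ^ m * x₁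
          = (x₁ * x₂) ^ j * (x₁ * x₂) ^ j * x₁ := by rw [hj, zpow_add]
        _ = (x₁ * x₂) ^ j * (x₁ * (x₁ * x₂) ^ (-j) * x₁⁻¹) * x₁ := by
            rw [dih_key h1 h2, neg_neg]
        _ = (x₁ * x₂) ^ j * x₁ * ((x₁ * x₂) ^ j)⁻¹ := by
            rw [← zpow_neg]; group
    · refine ⟨(x₁ * x₂) ^ j * x₁, Or.inr ?_⟩
      have hexp : m = j + (1 + j) := by rw [hj]; ring
      calc (x₁ * x₂) ^ m * x₁
          = (x₁ * x₂) ^ j * ((x₁ * x₂) ^ (1 : ℤ) * (x₁ * x₂) ^ j) * x₁ := by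
            rw [hexp, zpow_add, zpow_add]
        _ = (x₁ * x₂) ^ j * ((x₁ * x₂) * (x₁ * (x₁ * x₂) ^ (-j) * x₁⁻¹)) * x₁ := by
            rw [dih_key h1 h2, neg_neg, zpow_one]
        _ = (x₁ * x₂) ^ j * x₁ * x₂ * (x₁ * (x₁ * x₂) ^ (-j)) := by group
        _ = (x₁ * x₂) ^ j * x₁ * x₂ * ((x₁ * x₂) ^ j * x₁)⁻¹ := by
            rw [mul_inv_rev, inv_self h1, ← zpow_neg]

end Dihedral

end SpaceGroupAux

set_option maxHeartbeats 1000000 in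
open SpaceGroupAux in
/-- Theorem 9: let `N` be a torsion-free complete normal subgroup of the `n`-space group
`Γ` with `Γ/N` infinite dihedral, generated by the order-2 cosets `Nγ₁`, `Nγ₂`.  Then `Γ`
is torsion-free iff neither `Nγ₁` nor `Nγ₂` fixes a point of `V/N`.  Here `Nγᵢ` fixes a
point of `V/N` iff there are `v ∈ V` and `ν ∈ N` with `γᵢ • v - ν • v ∈ V^⊥`
(i.e. the `V`-part of `γᵢ • v` lies in the `N`-orbit of `v`). -/
theorem torsionfree_iff_no_fixed_point {n : ℕ} (Γ N : Subgroup (Iso n)) (γ₁ γ₂ : Iso n)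
    (hΓ : IsSpaceGroup Γ) (hN : IsCompleteNormal N Γ)
    (hNtf : Monoid.IsTorsionFree N)
    (h1 : γ₁ ∈ Γ) (h2 : γ₂ ∈ Γ)
    (h1n : γ₁ ∉ N) (h2n : γ₂ ∉ N)
    (h1s : γ₁ * γ₁ ∈ N) (h2s : γ₂ * γ₂ ∈ N)
    (hgen : Γ ≤ N ⊔ Subgroup.closure {γ₁, γ₂})
    (hinf : ∀ k : ℕ, 0 < k → (γ₁ * γ₂) ^ k ∉ N) :
    Monoid.IsTorsionFree Γ ↔
      ((¬ ∃ v ∈ spanOf N, ∃ ν ∈ N, γ₁ • v - ν • v ∈ perp (spanOf N)) ∧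
       (¬ ∃ v ∈ spanOf N, ∃ ν ∈ N, γ₂ • v - ν • v ∈ perp (spanOf N))) := by
  classical
  obtain ⟨hdisc, -⟩ := hΓ
  -- Forward key: a fixed point for the coset of γ gives a torsion element
  have key1 : ∀ γ : Iso n, γ ∈ Γ → γ ∉ N → γ * γ ∈ N →
      (∃ v ∈ spanOf N, ∃ ν ∈ N, γ • v - ν • v ∈ perp (spanOf N)) →
      ¬ Monoid.IsTorsionFree Γ := by
    rintro γ hγ hγn hγs ⟨v, hv, ν, hν, hw⟩ htf
    set g : Iso n := ν⁻¹ * γ with hg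
    have hgΓ : g ∈ Γ := mul_mem (inv_mem (hN.1.1 hν)) hγ
    have hgN : g ∉ N := by
      intro hmem
      apply hγn
      have h' : ν * g ∈ N := mul_mem hν hmem
      rw [hg, ← mul_assoc, mul_inv_cancel, one_mul] at h'
      exact h'
    have hg1 : g ≠ 1 := fun h => hgN (h ▸ N.one_mem)
    set w : Eu n := γ • v - ν • v with hwdef
    have hMfix : ∀ z ∈ perp (spanOf N), (ν⁻¹).mat.mulVec z = z :=
      ((hN.2 ν⁻¹).mp (inv_mem hν)).2.2
    have hgv : g • v = v + w := by
      have hsplit : γ • v = ν • v + w := by rw [hwdef]; abel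
      rw [hg, mul_smul, hsplit, smul_add_vec, hMfix w hw, inv_smul_smul]
    have hAw : g.mat.mulVec w ∈ perp (spanOf N) := mat_mem_perp hN hgΓ hw
    have hg2N : g * g ∈ N := by
      have hc : γ * ν⁻¹ * γ⁻¹ ∈ N := hN.1.2 γ hγ _ (inv_mem hν)
      have heq : g * g = ν⁻¹ * ((γ * ν⁻¹ * γ⁻¹) * (γ * γ)) := by rw [hg]; group
      rw [heq]
      exact mul_mem (inv_mem hν) (mul_mem hc hγs)
    have hg2v : (g * g) • v = v := by
      have e1 : (g * g) • v = v + (w + g.mat.mulVec w) := by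
        rw [mul_smul, hgv, smul_add_vec, hgv]; abel
      have hP : (g * g) • v - v ∈ perp (spanOf N) := by
        rw [e1, add_sub_cancel_left]
        exact Submodule.add_mem _ hw hAw
      have hVmem : (g * g) • v - v ∈ spanOf N := by
        rw [Iso.smul_def]
        have hh1 : (g * g).a ∈ spanOf N := ((hN.2 _).mp hg2N).2.1
        have hh2 : (g * g).mat.mulVec v ∈ spanOf N := mat_mem_span hN (mul_mem hgΓ hgΓ) hv
        exact sub_mem (Submodule.add_mem _ hh1 hh2) hv
      have h0 := eq_zero_of_mem_inf (spanOf N) hVmem hP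
      exact sub_eq_zero.mp h0
    obtain ⟨k, hk, hk1⟩ := finite_order_of_fix hdisc (mul_mem hgΓ hgΓ) hg2v
    have hgg1 : g * g = 1 := by
      by_contra hne
      refine hNtf ⟨g * g, hg2N⟩ (fun hcon => hne (congrArg Subtype.val hcon)) ?_
      rw [isOfFinOrder_iff_pow_eq_one]
      refine ⟨k, hk, Subtype.ext ?_⟩
      rw [SubmonoidClass.coe_pow]
      exact hk1
    refine htf ⟨g, hgΓ⟩ (fun hcon => hg1 (congrArg Subtype.val hcon)) ?_
    rw [isOfFinOrder_iff_pow_eq_one]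
    refine ⟨2, by norm_num, Subtype.ext ?_⟩
    rw [SubmonoidClass.coe_pow]
    rw [pow_two]
    exact hgg1
  constructor
  · intro htf
    exact ⟨fun hfix => key1 γ₁ h1 h1n h1s hfix htf,
           fun hfix => key1 γ₂ h2 h2n h2s hfix htf⟩
  · rintro ⟨hno1, hno2⟩
    intro x hx1 hord
    obtain ⟨k, hk, hxk⟩ := isOfFinOrder_iff_pow_eq_one.mp hord
    set g : Iso n := (x : Iso n) with hgdef
    have hgΓ : g ∈ Γ := x.2
    have hgk : g ^ k = 1 := by
      have hc := congrArg Subtype.val hxk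
      rw [SubmonoidClass.coe_pow] at hc
      exact hc
    have hgN : g ∉ N := by
      intro hmem
      refine hNtf ⟨g, hmem⟩
        (fun hcon => hx1 (Subtype.ext (show (x : Iso n) = ((1 : ↥Γ) : Iso n) from
          congrArg (Subtype.val : ↥N → Iso n) hcon))) ?_
      rw [isOfFinOrder_iff_pow_eq_one]
      refine ⟨k, hk, Subtype.ext ?_⟩
      rw [SubmonoidClass.coe_pow]
      exact hgk
    -- quotient group
    let N' : Subgroup ↥Γ := N.subgroupOf Γ
    haveI hN'n : N'.Normal := by
      constructor
      intro a ha b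
      rw [Subgroup.mem_subgroupOf] at ha ⊢
      have hcc := hN.1.2 ↑b b.2 ↑a ha
      simpa using hcc
    set π := QuotientGroup.mk' N' with hπ
    have hone : ∀ a : ↥Γ, π a = 1 ↔ (a : Iso n) ∈ N := by
      intro a
      rw [hπ, QuotientGroup.mk'_apply, QuotientGroup.eq_one_iff]
      exact Subgroup.mem_subgroupOf
    have hx1sq : π ⟨γ₁, h1⟩ * π ⟨γ₁, h1⟩ = 1 := by
      rw [← map_mul, hone]
      exact h1s
    have hx2sq : π ⟨γ₂, h2⟩ * π ⟨γ₂, h2⟩ = 1 := by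
      rw [← map_mul, hone]
      exact h2s
    have hgenQ : ∀ q : ↥Γ ⧸ N', q ∈ Subgroup.closure {π ⟨γ₁, h1⟩, π ⟨γ₂, h2⟩} := by
      intro q
      obtain ⟨a, rfl⟩ := QuotientGroup.mk'_surjective N' q
      set C := Subgroup.closure {π ⟨γ₁, h1⟩, π ⟨γ₂, h2⟩} with hC
      set K : Subgroup (Iso n) := Subgroup.map Γ.subtype (Subgroup.comap π C) with hK
      have hNK : N ≤ K := by
        intro νe hνe
        refine ⟨⟨νe, hN.1.1 hνe⟩, ?_, rfl⟩
        have hone1 : π ⟨νe, hN.1.1 hνe⟩ = 1 := (hone _).mpr hνe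
        have hmem : (⟨νe, hN.1.1 hνe⟩ : ↥Γ) ∈ Subgroup.comap π C := by
          rw [Subgroup.mem_comap, hone1]
          exact C.one_mem
        exact hmem
      have hcK : Subgroup.closure {γ₁, γ₂} ≤ K := by
        rw [Subgroup.closure_le]
        rintro y (rfl | rfl)
        · exact ⟨⟨y, h1⟩, Subgroup.subset_closure (Set.mem_insert _ _), rfl⟩
        · exact ⟨⟨y, h2⟩, Subgroup.subset_closure (Set.mem_insert_of_mem _ rfl), rfl⟩
      have haK : (↑a : Iso n) ∈ K := (sup_le hNK hcK) (hgen a.2)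
      obtain ⟨b, hb, hba⟩ := haK
      have hbeq : b = a := Subtype.ext hba
      rw [← hbeq]
      exact hb
    have hrinf : ∀ m : ℤ, (π ⟨γ₁, h1⟩ * π ⟨γ₂, h2⟩) ^ m = 1 → m = 0 := by
      intro m hm
      rw [← map_mul, ← map_zpow, hone] at hm
      have hm' : (γ₁ * γ₂) ^ m ∈ N := by
        have hcoe : ((((⟨γ₁, h1⟩ : ↥Γ) * ⟨γ₂, h2⟩) ^ m : ↥Γ) : Iso n) = (γ₁ * γ₂) ^ m := by
          rw [SubgroupClass.coe_zpow]
          norm_num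
        rw [hcoe] at hm
        exact hm
      by_contra hm0
      rcases lt_or_gt_of_ne hm0 with hlt | hgt
      · have hneg : (γ₁ * γ₂) ^ (-m) ∈ N := by
          rw [zpow_neg]
          exact inv_mem hm'
        have hnat : (γ₁ * γ₂) ^ ((-m).toNat) ∈ N := by
          rw [← zpow_natCast, Int.toNat_of_nonneg (by omega)]
          exact hneg
        exact hinf (-m).toNat (by omega) hnat
      · have hnat : (γ₁ * γ₂) ^ (m.toNat) ∈ N := by
          rw [← zpow_natCast, Int.toNat_of_nonneg (by omega)]
          exact hm'
        exact hinf m.toNat (by omega) hnat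
    -- the coset of g is conjugate to that of γ₁ or γ₂; derive a fixed point
    have key2 : ∀ γ : Iso n, γ ∈ Γ →
        (∃ w ∈ Γ, ∃ ν ∈ N, w⁻¹ * g * w = ν * γ) →
        ∃ v ∈ spanOf N, ∃ ν ∈ N, γ • v - ν • v ∈ perp (spanOf N) := by
      rintro γ hγ ⟨w, hwΓ, ν, hν, hconj⟩
      obtain ⟨x₀, hx₀⟩ := exists_fixed g hk hgk
      set y := w⁻¹ • x₀ with hy
      have hfix : (ν * γ) • y = y := by
        rw [← hconj, hy, ← mul_smul]
        have hred : w⁻¹ * g * w * w⁻¹ = w⁻¹ * g := by group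
        rw [hred, mul_smul, hx₀]
      have hγy : γ • y = ν⁻¹ • y := by
        rw [eq_inv_smul_iff, ← mul_smul]
        exact hfix
      obtain ⟨v, hv, hd⟩ := exists_decomp (spanOf N) y
      set d := y - v with hddef
      refine ⟨v, hv, ν⁻¹, inv_mem hν, ?_⟩
      have hMfix : ∀ z ∈ perp (spanOf N), (ν⁻¹).mat.mulVec z = z :=
        ((hN.2 _).mp (inv_mem hν)).2.2
      have hyvd : y = v + d := by rw [hddef]; abel
      have e1 : γ • y = γ • v + γ.mat.mulVec d := by rw [hyvd, smul_add_vec]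
      have e2 : ν⁻¹ • y = ν⁻¹ • v + d := by
        rw [hyvd, smul_add_vec, hMfix d hd]
      have heq : γ • v + γ.mat.mulVec d = ν⁻¹ • v + d := by
        rw [← e1, ← e2, hγy]
      have hsub : γ • v - ν⁻¹ • v = d - γ.mat.mulVec d := by
        rw [sub_eq_sub_iff_add_eq_add, heq, add_comm]
      rw [hsub]
      exact sub_mem hd (mat_mem_perp hN hγ hd)
    -- apply the dihedral classification
    have htne : π x ≠ 1 := fun h => hgN ((hone x).mp h)
    have htk : (π x) ^ k = 1 := by
      rw [← map_pow, hxk, map_one]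
    obtain ⟨wq, hcase⟩ := dihedral_torsion hx1sq hx2sq hrinf hgenQ htne hk htk
    obtain ⟨w', rfl⟩ := QuotientGroup.mk'_surjective N' wq
    have hmain : ∀ (γ : Iso n) (hγ : γ ∈ Γ),
        π x = π w' * π ⟨γ, hγ⟩ * (π w')⁻¹ →
        ∃ v ∈ spanOf N, ∃ ν ∈ N, γ • v - ν • v ∈ perp (spanOf N) := by
      intro γ hγ hcaseγ
      have hquo : π (w'⁻¹ * x * w' * (⟨γ, hγ⟩ : ↥Γ)⁻¹) = 1 := by
        rw [map_mul, map_mul, map_mul, map_inv, map_inv, hcaseγ]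
        group
      have hmem := (hone _).mp hquo
      have hcoe : ((w'⁻¹ * x * w' * (⟨γ, hγ⟩ : ↥Γ)⁻¹ : ↥Γ) : Iso n)
          = (↑w' : Iso n)⁻¹ * g * ↑w' * γ⁻¹ := by
        simp only [Subgroup.coe_mul, Subgroup.coe_inv]
        rfl
      rw [hcoe] at hmem
      refine key2 γ hγ ⟨↑w', w'.2, (↑w' : Iso n)⁻¹ * g * ↑w' * γ⁻¹, hmem, ?_⟩
      group
    rcases hcase with hcase | hcase
    · exact hno1 (hmain γ₁ h1 hcase)
    · exact hno2 (hmain γ₂ h2 hcase)
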